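/- arXiv:1603.06498 — 2 statements merged into one kernel-verified Lean document; each statement's English description precedes it below -/
import Mathlib

section
/- Let f : ℝ → ℝ be twice continuously differentiable. Then M₁ and M₂ are differentiable and the identity Φ(y)·M₂'(y) + Φ'(y)·M₁'(y) = 0 holds for every y ∈ ℝ. -/
open MeasureTheory Real Filter

/-- `Fa a x = ∫₀^∞ exp(-t² - 2xt) · t^a dt`, a Hermite-type function of negative degree. -/
noncomputable def Fa (a x : ℝ) : ℝ :=
  ∫ t in Set.Ioi (0 : ℝ), Real.exp (-(t ^ 2) - 2 * x * t) * t ^ a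

/-- `Phi β σh δ c x = F_a(u(x))` with `a = δ/β - 1` and `u(x) = (c - βx)/(√β·σ̂)`. -/
noncomputable def Phi (β σh δ c : ℝ) (x : ℝ) : ℝ :=
  Fa (δ / β - 1) ((c - β * x) / (Real.sqrt β * σh))

/-- `M₁ = (f·Φ' - f'·Φ)/D` with `D = (Φ')² - Φ·Φ''`. -/
noncomputable def M1 (β σh δ c : ℝ) (f : ℝ → ℝ) (y : ℝ) : ℝ :=
  (f y * deriv (Phi β σh δ c) y - deriv f y * Phi β σh δ c y) /
    ((deriv (Phi β σh δ c) y) ^ 2 - Phi β σh δ c y * deriv (deriv (Phi β σh δ c)) y)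

/-- `M₂ = (f'·Φ' - f·Φ'')/D` with `D = (Φ')² - Φ·Φ''`. -/
noncomputable def M2 (β σh δ c : ℝ) (f : ℝ → ℝ) (y : ℝ) : ℝ :=
  (deriv f y * deriv (Phi β σh δ c) y - f y * deriv (deriv (Phi β σh δ c)) y) /
    ((deriv (Phi β σh δ c) y) ^ 2 - Phi β σh δ c y * deriv (deriv (Phi β σh δ c)) y)


/-!
By Cramer's rule, `M₁` and `M₂` solve the linear system
`M₁ Φ' + M₂ Φ = f`, `M₁ Φ'' + M₂ Φ' = f'`, whose determinant `D` does not vanish.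
Differentiating the first equation and subtracting the second leaves `Φ M₂' + Φ' M₁' = 0`.
Differentiation under the integral sign gives `F_a' = -2 F_{a+1}`, so the `n`-th derivative of `Φ`
is `(2β/(√β σ̂))ⁿ F_{a+n} ∘ u`, and `D < 0` is the strict Cauchy–Schwarz inequality
`F_{a+1}² < F_a F_{a+2}` for the positive measure `e^{-t²-2zt} t^a dt` on `(0, ∞)`.
-/

lemma setIntegral_pos_of_ae_pos {α : Type*} [MeasurableSpace α] {μ : Measure α} {s : Set α}
    {g : α → ℝ} (hs : μ s ≠ 0) (hg : IntegrableOn g s μ) (hpos : ∀ᵐ x ∂μ.restrict s, 0 < g x) :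
    0 < ∫ x in s, g x ∂μ := by
  rw [integral_pos_iff_support_of_nonneg_ae (hpos.mono fun _ hx => hx.le) hg]
  have hcompl : μ.restrict s (Function.support g)ᶜ = 0 := ae_iff.1 (hpos.mono fun _ hx => hx.ne')
  refine pos_iff_ne_zero.2 fun h => hs ?_
  rw [← Measure.restrict_apply_univ, ← Set.union_compl_self (Function.support g)]
  exact measure_union_null h hcompl

section Fa

variable {a : ℝ}

noncomputable def FaIntegrand (a x t : ℝ) : ℝ := exp (-(t ^ 2) - 2 * x * t) * t ^ a

lemma FaIntegrand_pos (a x : ℝ) {t : ℝ} (ht : 0 < t) : 0 < FaIntegrand a x t :=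
  mul_pos (exp_pos _) (rpow_pos_of_pos ht a)

lemma FaIntegrand_mul_self (a x : ℝ) {t : ℝ} (ht : 0 < t) :
    FaIntegrand a x t * t = FaIntegrand (a + 1) x t := by
  rw [FaIntegrand, FaIntegrand, rpow_add_one ht.ne', mul_assoc]

lemma FaIntegrand_le (a : ℝ) {x R t : ℝ} (hx : |x| ≤ R) (ht : 0 ≤ t) :
    FaIntegrand a x t ≤ exp (2 * R ^ 2) * (t ^ a * exp (-(1 / 2) * t ^ 2)) := by
  have hexp : exp (-(t ^ 2) - 2 * x * t) ≤ exp (2 * R ^ 2) * exp (-(1 / 2) * t ^ 2) := by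
    rw [← exp_add, exp_le_exp]
    nlinarith [sq_nonneg (t - 2 * R), mul_le_mul_of_nonneg_right (abs_le.1 hx).1 ht]
  calc FaIntegrand a x t ≤ exp (2 * R ^ 2) * exp (-(1 / 2) * t ^ 2) * t ^ a :=
        mul_le_mul_of_nonneg_right hexp (rpow_nonneg ht a)
    _ = _ := by ring

lemma integrableOn_FaIntegrand (ha : -1 < a) (x : ℝ) :
    IntegrableOn (FaIntegrand a x) (Set.Ioi 0) := by
  refine ((integrableOn_rpow_mul_exp_neg_mul_sq (b := 1 / 2) (by norm_num) ha).const_mul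
    (exp (2 * |x| ^ 2))).mono' (by unfold FaIntegrand; fun_prop) ?_
  filter_upwards [ae_restrict_mem measurableSet_Ioi] with t ht
  rw [norm_of_nonneg (FaIntegrand_pos a x ht).le]
  exact FaIntegrand_le a le_rfl (le_of_lt ht)

lemma hasDerivAt_FaIntegrand (a t x : ℝ) (ht : 0 < t) :
    HasDerivAt (fun x => FaIntegrand a x t) (-2 * FaIntegrand (a + 1) x t) x := by
  have hlin : HasDerivAt (fun x => -(t ^ 2) - 2 * x * t) (-2 * t) x := by
    simpa using ((hasDerivAt_id x).const_mul 2).mul_const t |>.const_sub (-(t ^ 2))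
  refine (hlin.exp.mul_const (t ^ a)).congr_deriv ?_
  rw [← FaIntegrand_mul_self a x ht, FaIntegrand]
  ring

lemma hasDerivAt_Fa (ha : -1 < a) (x₀ : ℝ) : HasDerivAt (Fa a) (-2 * Fa (a + 1) x₀) x₀ := by
  set R := |x₀| + 1
  have hbound : ∀ᵐ t ∂volume.restrict (Set.Ioi 0), ∀ x ∈ Metric.ball x₀ 1,
      ‖-2 * FaIntegrand (a + 1) x t‖ ≤
        2 * (exp (2 * R ^ 2) * (t ^ (a + 1) * exp (-(1 / 2) * t ^ 2))) := by
    filter_upwards [ae_restrict_mem measurableSet_Ioi] with t ht x hx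
    have hxR : |x| ≤ R := by
      have := abs_sub_abs_le_abs_sub x x₀
      rw [Metric.mem_ball, Real.dist_eq] at hx
      linarith
    rw [norm_mul, norm_of_nonneg (FaIntegrand_pos _ x ht).le, norm_neg, Real.norm_two]
    exact mul_le_mul_of_nonneg_left (FaIntegrand_le _ hxR (le_of_lt ht)) zero_le_two
  have key := hasDerivAt_integral_of_dominated_loc_of_deriv_le (μ := volume.restrict (Set.Ioi 0))
    (F := fun x t => FaIntegrand a x t) (F' := fun x t => -2 * FaIntegrand (a + 1) x t)
    (Metric.ball_mem_nhds x₀ one_pos)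
    (.of_forall fun x => (integrableOn_FaIntegrand ha x).aestronglyMeasurable)
    (integrableOn_FaIntegrand ha x₀)
    ((integrableOn_FaIntegrand (by linarith) x₀).const_mul (-2)).aestronglyMeasurable hbound
    (((integrableOn_rpow_mul_exp_neg_mul_sq (by norm_num) (by linarith)).const_mul _).const_mul 2)
    (by
      filter_upwards [ae_restrict_mem measurableSet_Ioi] with t ht x _
      exact hasDerivAt_FaIntegrand a t x ht)
  have hderiv := key.2
  rwa [integral_const_mul] at hderiv

lemma Fa_pos (ha : -1 < a) (x : ℝ) : 0 < Fa a x :=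
  setIntegral_pos_of_ae_pos (by simp) (integrableOn_FaIntegrand ha x)
    (ae_restrict_of_forall_mem measurableSet_Ioi fun _ ht => FaIntegrand_pos a x ht)

lemma FaIntegrand_mul_sq_sub (a x p q : ℝ) {t : ℝ} (ht : 0 < t) :
    FaIntegrand a x t * (p * t - q) ^ 2 = p ^ 2 * FaIntegrand (a + 2) x t
      - 2 * p * q * FaIntegrand (a + 1) x t + q ^ 2 * FaIntegrand a x t := by
  rw [show a + 2 = a + 1 + 1 by ring, ← FaIntegrand_mul_self (a + 1) x ht,
    ← FaIntegrand_mul_self a x ht]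
  ring

lemma integral_FaIntegrand_mul_sq_sub (ha : -1 < a) (x p q : ℝ) :
    IntegrableOn (fun t => FaIntegrand a x t * (p * t - q) ^ 2) (Set.Ioi 0) ∧
    ∫ t in Set.Ioi 0, FaIntegrand a x t * (p * t - q) ^ 2 =
      p ^ 2 * Fa (a + 2) x - 2 * p * q * Fa (a + 1) x + q ^ 2 * Fa a x := by
  have h₀ := integrableOn_FaIntegrand ha x
  have h₁ := integrableOn_FaIntegrand (a := a + 1) (by linarith) x
  have h₂ := integrableOn_FaIntegrand (a := a + 2) (by linarith) x
  have hexpand := fun t (ht : t ∈ Set.Ioi (0 : ℝ)) => FaIntegrand_mul_sq_sub a x p q ht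
  have i₀ : IntegrableOn (fun t => q ^ 2 * FaIntegrand a x t) (Set.Ioi 0) := h₀.const_mul _
  have i₁ : IntegrableOn (fun t => 2 * p * q * FaIntegrand (a + 1) x t) (Set.Ioi 0) :=
    h₁.const_mul _
  have i₂ : IntegrableOn (fun t => p ^ 2 * FaIntegrand (a + 2) x t) (Set.Ioi 0) := h₂.const_mul _
  have i₂₁ : IntegrableOn (fun t => p ^ 2 * FaIntegrand (a + 2) x t
      - 2 * p * q * FaIntegrand (a + 1) x t) (Set.Ioi 0) := i₂.sub i₁
  refine ⟨(i₂₁.add i₀).congr_fun (fun t ht => (hexpand t ht).symm) measurableSet_Ioi, ?_⟩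
  rw [setIntegral_congr_fun measurableSet_Ioi hexpand, integral_add i₂₁ i₀, integral_sub i₂ i₁,
    integral_const_mul, integral_const_mul, integral_const_mul]
  rfl

lemma sq_Fa_lt_mul (ha : -1 < a) (x : ℝ) : Fa (a + 1) x ^ 2 < Fa a x * Fa (a + 2) x := by
  set A := Fa a x
  set B := Fa (a + 1) x
  have hA : 0 < A := Fa_pos ha x
  obtain ⟨hint, hval⟩ := integral_FaIntegrand_mul_sq_sub ha x A B
  have hpos : 0 < ∫ t in Set.Ioi 0, FaIntegrand a x t * (A * t - B) ^ 2 := by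
    refine setIntegral_pos_of_ae_pos (by simp) hint ?_
    filter_upwards [ae_restrict_mem measurableSet_Ioi, ae_restrict_of_ae (volume.ae_ne (B / A))]
      with t ht hne
    have : A * t - B ≠ 0 := fun h => hne (by field_simp; linarith)
    exact mul_pos (FaIntegrand_pos a x ht) (by positivity)
  rw [hval] at hpos
  nlinarith

end Fa

section Phi

variable {β σh δ : ℝ} (c : ℝ)

noncomputable def PhiDeriv (β σh δ c : ℝ) (n : ℕ) (x : ℝ) : ℝ :=
  (2 * β / (√β * σh)) ^ n * Fa (δ / β - 1 + n) ((c - β * x) / (√β * σh))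

lemma Phi_eq_PhiDeriv_zero : Phi β σh δ c = PhiDeriv β σh δ c 0 := by
  ext x
  simp [Phi, PhiDeriv]

lemma hasDerivAt_PhiDeriv (hβ : 0 < β) (hδ : 0 < δ) (n : ℕ) (x : ℝ) :
    HasDerivAt (PhiDeriv β σh δ c n) (PhiDeriv β σh δ c (n + 1) x) x := by
  have ha : -1 < δ / β - 1 + n := by have := div_pos hδ hβ; have := n.cast_nonneg (α := ℝ); linarith
  have hu : HasDerivAt (fun x => (c - β * x) / (√β * σh)) (-β / (√β * σh)) x := by
    simpa using ((hasDerivAt_id x).const_mul β |>.const_sub c).div_const (√β * σh)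
  refine (((hasDerivAt_Fa ha _).comp x hu).const_mul ((2 * β / (√β * σh)) ^ n)).congr_deriv ?_
  rw [PhiDeriv, pow_succ, Nat.cast_succ, ← add_assoc]
  ring

lemma deriv_PhiDeriv (hβ : 0 < β) (hδ : 0 < δ) (n : ℕ) :
    deriv (PhiDeriv β σh δ c n) = PhiDeriv β σh δ c (n + 1) :=
  funext fun x => (hasDerivAt_PhiDeriv c hβ hδ n x).deriv

lemma differentiable_PhiDeriv (hβ : 0 < β) (hδ : 0 < δ) (n : ℕ) :
    Differentiable ℝ (PhiDeriv β σh δ c n) :=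
  fun x => (hasDerivAt_PhiDeriv c hβ hδ n x).differentiableAt

lemma iterate_deriv_Phi (hβ : 0 < β) (hδ : 0 < δ) (n : ℕ) :
    deriv^[n] (Phi β σh δ c) = PhiDeriv β σh δ c n := by
  induction n with
  | zero => exact Phi_eq_PhiDeriv_zero c
  | succ n ih => rw [Function.iterate_succ_apply', ih, deriv_PhiDeriv c hβ hδ]

lemma sq_deriv_Phi_lt_mul (hβ : 0 < β) (hσ : 0 < σh) (hδ : 0 < δ) (y : ℝ) :
    deriv (Phi β σh δ c) y ^ 2 < Phi β σh δ c y * deriv (deriv (Phi β σh δ c)) y := by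
  rw [Phi_eq_PhiDeriv_zero, deriv_PhiDeriv c hβ hδ, deriv_PhiDeriv c hβ hδ]
  have hK : 0 < (2 * β / (√β * σh)) ^ 2 := by positivity
  have hsq := sq_Fa_lt_mul (a := δ / β - 1) (by linarith [div_pos hδ hβ])
    ((c - β * y) / (√β * σh))
  simp only [PhiDeriv]
  push_cast
  rw [pow_zero, pow_one, one_mul, add_zero]
  nlinarith [mul_lt_mul_of_pos_left hsq hK]

end Phi

lemma two_by_two_cramer {p₀ p₁ p₂ g₀ g₁ : ℝ} (hD : p₁ ^ 2 - p₀ * p₂ ≠ 0) :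
    (g₀ * p₁ - g₁ * p₀) / (p₁ ^ 2 - p₀ * p₂) * p₁ + (g₁ * p₁ - g₀ * p₂) / (p₁ ^ 2 - p₀ * p₂) * p₀
      = g₀ ∧
    (g₀ * p₁ - g₁ * p₀) / (p₁ ^ 2 - p₀ * p₂) * p₂ + (g₁ * p₁ - g₀ * p₂) / (p₁ ^ 2 - p₀ * p₂) * p₁
      = g₁ := by
  constructor <;> field_simp <;> ring

lemma mul_deriv_add_mul_deriv_eq_zero_of_linear_system {φ f m₁ m₂ : ℝ → ℝ} (hφ : Differentiable ℝ φ)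
    (hφ' : Differentiable ℝ (deriv φ)) (hm₁ : Differentiable ℝ m₁) (hm₂ : Differentiable ℝ m₂)
    (h₀ : ∀ y, m₁ y * deriv φ y + m₂ y * φ y = f y)
    (h₁ : ∀ y, m₁ y * deriv (deriv φ) y + m₂ y * deriv φ y = deriv f y) (y : ℝ) :
    φ y * deriv m₂ y + deriv φ y * deriv m₁ y = 0 := by
  have hf : HasDerivAt f (deriv m₁ y * deriv φ y + m₁ y * deriv (deriv φ) y
      + (deriv m₂ y * φ y + m₂ y * deriv φ y)) y := by
    rw [← funext h₀]
    exact ((hm₁ y).hasDerivAt.mul (hφ' y).hasDerivAt).add ((hm₂ y).hasDerivAt.mul (hφ y).hasDerivAt)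
  linear_combination hf.deriv.symm - h₁ y

/-- For twice continuously differentiable `f`, the identity
`Φ(y)·M₂'(y) + Φ'(y)·M₁'(y) = 0` holds for all `y`. -/
theorem M1_M2_derivative_identity (β σh δ c : ℝ) (hβ : 0 < β) (hσ : 0 < σh) (hδ : 0 < δ)
    (f : ℝ → ℝ) (hf : ContDiff ℝ 2 f) :
    Differentiable ℝ (M1 β σh δ c f) ∧ Differentiable ℝ (M2 β σh δ c f) ∧
    ∀ y : ℝ, Phi β σh δ c y * deriv (M2 β σh δ c f) y
      + deriv (Phi β σh δ c) y * deriv (M1 β σh δ c f) y = 0 := by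
  have hΦ : ∀ n, Differentiable ℝ (deriv^[n] (Phi β σh δ c)) := by
    intro n
    rw [iterate_deriv_Phi c hβ hδ]
    exact differentiable_PhiDeriv c hβ hδ n
  have hD (y : ℝ) : deriv (Phi β σh δ c) y ^ 2 - Phi β σh δ c y * deriv (deriv (Phi β σh δ c)) y
      ≠ 0 := (sub_neg.2 (sq_deriv_Phi_lt_mul c hβ hσ hδ y)).ne
  have hf₀ : Differentiable ℝ f := hf.differentiable (by norm_num)
  have hf₁ : Differentiable ℝ (deriv f) := by
    simpa using hf.differentiable_iteratedDeriv 1 (by norm_num)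
  have hM₁ : Differentiable ℝ (M1 β σh δ c f) :=
    ((hf₀.mul (hΦ 1)).sub (hf₁.mul (hΦ 0))).div (((hΦ 1).pow 2).sub ((hΦ 0).mul (hΦ 2))) hD
  have hM₂ : Differentiable ℝ (M2 β σh δ c f) :=
    ((hf₁.mul (hΦ 1)).sub (hf₀.mul (hΦ 2))).div (((hΦ 1).pow 2).sub ((hΦ 0).mul (hΦ 2))) hD
  exact ⟨hM₁, hM₂, mul_deriv_add_mul_deriv_eq_zero_of_linear_system (hΦ 0) (hΦ 1) hM₁ hM₂
    (fun y => (two_by_two_cramer (hD y)).1) (fun y => (two_by_two_cramer (hD y)).2)⟩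
end

section
/- Let f : ℝ → ℝ be twice continuously differentiable, let Θ > 0, and let 𝕪 : [0,Θ] → ℝ be differentiable with M₁'(𝕪(ℓ)) ≠ 0 and 𝕪'(ℓ) = M₂(𝕪(ℓ))/M₁'(𝕪(ℓ)) for all ℓ ∈ [0,Θ]. Define 𝕣(ℓ) := ∫₀^ℓ (1 - 𝕪'(x)) · (Φ'(𝕪(x))/Φ(𝕪(x))) dx. Then the function ℓ ↦ exp(𝕣(ℓ)) · Φ(𝕪(ℓ)) · M₂(𝕪(ℓ)) is constant on [0,Θ]. -/
/-!
Writing `D = Φ'² - ΦΦ''`, the pair `(M₁, M₂)` is the solution, by Cramer's rule, of the linear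
system `M₁Φ' + M₂Φ = f`, `M₁Φ'' + M₂Φ' = f'`. Differentiating the first equation and subtracting
the second gives `Φ'M₁' + ΦM₂' = 0`. Since `𝕣' = (1 - 𝕪')Φ'(𝕪)/Φ(𝕪)` and `M₂(𝕪) = 𝕪'M₁'(𝕪)`,
the derivative of `exp(𝕣)Φ(𝕪)M₂(𝕪)` is `exp(𝕣)𝕪'(Φ'M₁' + ΦM₂')(𝕪) = 0`.

All this needs of `Φ` is that it is `C³`, nonvanishing and has `D ≠ 0`. For `Φ = F_a ∘ u` this
follows from `F_b' = -2F_{b+1}` (differentiation under the integral sign) and the strict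
Cauchy–Schwarz inequality `F_{b+1}² < F_b F_{b+2}` for the measure `exp(-t² - 2zt) t^b dt`.
-/

open MeasureTheory Real Filter

open Set

lemma setIntegral_pos_of_ae_pos_s12 {g : ℝ → ℝ} {s : Set ℝ} (hs : volume s ≠ 0)
    (hg : IntegrableOn g s) (hpos : ∀ᵐ t ∂volume.restrict s, 0 < g t) :
    0 < ∫ t in s, g t := by
  rw [integral_pos_iff_support_of_nonneg_ae (hpos.mono fun _ ht => ht.le) hg,
    measure_congr ((eventuallyEq_univ (s := Function.support g)).2 (hpos.mono fun _ ht => ht.ne')),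
    Measure.restrict_apply_univ]
  exact pos_iff_ne_zero.2 hs

section Fa

variable {b : ℝ}

lemma measurable_Fa_integrand (b x : ℝ) :
    Measurable fun t : ℝ => exp (-(t ^ 2) - 2 * x * t) * t ^ b := by
  fun_prop

lemma integrableOn_Fa_integrand (hb : -1 < b) (x : ℝ) :
    IntegrableOn (fun t : ℝ => exp (-(t ^ 2) - 2 * x * t) * t ^ b) (Ioi 0) := by
  refine ((integrableOn_rpow_mul_exp_neg_mul_sq (b := 1 / 2) (by norm_num) hb).const_mul
    (exp (2 * x ^ 2))).mono' (measurable_Fa_integrand b x).aestronglyMeasurable ?_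
  filter_upwards [ae_restrict_mem measurableSet_Ioi] with t (ht : 0 < t)
  have hsq : -(t ^ 2) - 2 * x * t ≤ 2 * x ^ 2 + -(1 / 2) * t ^ 2 := by
    nlinarith [sq_nonneg (t + 2 * x)]
  rw [norm_of_nonneg (by positivity)]
  calc exp (-(t ^ 2) - 2 * x * t) * t ^ b ≤ exp (2 * x ^ 2 + -(1 / 2) * t ^ 2) * t ^ b := by
        gcongr
    _ = exp (2 * x ^ 2) * (t ^ b * exp (-(1 / 2) * t ^ 2)) := by rw [exp_add]; ring

lemma Fa_add_eq_integral (b k x : ℝ) :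
    Fa (b + k) x = ∫ t in Ioi 0, t ^ k * (exp (-(t ^ 2) - 2 * x * t) * t ^ b) := by
  refine setIntegral_congr_fun measurableSet_Ioi fun t (ht : 0 < t) => ?_
  simp only [rpow_add ht]
  ring

lemma Fa_pos_s12 (hb : -1 < b) (x : ℝ) : 0 < Fa b x :=
  setIntegral_pos_of_ae_pos_s12 (by simp) (integrableOn_Fa_integrand hb x)
    (by filter_upwards [ae_restrict_mem measurableSet_Ioi] with t (ht : 0 < t); positivity)

lemma hasDerivAt_Fa_s12 (hb : -1 < b) (x : ℝ) : HasDerivAt (Fa b) (-2 * Fa (b + 1) x) x := by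
  have key := hasDerivAt_integral_of_dominated_loc_of_deriv_le (μ := volume.restrict (Ioi 0))
    (F := fun y t => exp (-(t ^ 2) - 2 * y * t) * t ^ b)
    (F' := fun y t => -2 * t * (exp (-(t ^ 2) - 2 * y * t) * t ^ b))
    (bound := fun t => 2 * (exp (-(t ^ 2) - 2 * (x - 1) * t) * t ^ (b + 1)))
    (Metric.ball_mem_nhds x one_pos)
    (Eventually.of_forall fun y => (measurable_Fa_integrand b y).aestronglyMeasurable)
    (integrableOn_Fa_integrand hb x) (by fun_prop) ?_
    ((integrableOn_Fa_integrand (by linarith) (x - 1)).const_mul 2) ?_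
  · rw [Fa_add_eq_integral, ← integral_const_mul]
    refine key.2.congr_deriv (setIntegral_congr_fun measurableSet_Ioi fun t _ => ?_)
    rw [rpow_one]
    ring
  · filter_upwards [ae_restrict_mem measurableSet_Ioi] with t (ht : 0 < t) y hy
    have hxy : x - 1 < y := by linarith [(abs_lt.1 (mem_ball_iff_norm.1 hy)).1]
    rw [norm_mul, norm_mul, norm_of_nonneg (by positivity : 0 ≤ exp (-(t ^ 2) - 2 * y * t) * t ^ b),
      norm_neg, norm_two, norm_of_nonneg ht.le, rpow_add ht, rpow_one]
    calc 2 * t * (exp (-(t ^ 2) - 2 * y * t) * t ^ b)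
        = 2 * (exp (-(t ^ 2) - 2 * y * t) * (t ^ b * t)) := by ring
      _ ≤ 2 * (exp (-(t ^ 2) - 2 * (x - 1) * t) * (t ^ b * t)) := by gcongr
  · filter_upwards with t y _
    refine ((((hasDerivAt_id' y).const_mul 2).mul_const t).const_sub (-(t ^ 2))).exp.mul_const
      (t ^ b) |>.congr_deriv ?_
    ring

lemma contDiff_Fa (n : ℕ) : ∀ {b : ℝ}, -1 < b → ContDiff ℝ n (Fa b) := by
  induction n with
  | zero =>
    intro b hb
    rw [Nat.cast_zero, contDiff_zero]
    exact continuous_iff_continuousAt.2 fun x => (hasDerivAt_Fa_s12 hb x).continuousAt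
  | succ n ih =>
    intro b hb
    have hderiv : deriv (Fa b) = fun x => -2 * Fa (b + 1) x :=
      funext fun x => (hasDerivAt_Fa_s12 hb x).deriv
    rw [Nat.cast_succ, contDiff_succ_iff_deriv, hderiv]
    refine ⟨fun x => (hasDerivAt_Fa_s12 hb x).differentiableAt, by simp, ?_⟩
    exact contDiff_const.mul (ih (by linarith))

lemma Fa_sq_lt_mul (hb : -1 < b) (x : ℝ) : Fa (b + 1) x ^ 2 < Fa b x * Fa (b + 2) x := by
  set w : ℝ → ℝ := fun t => exp (-(t ^ 2) - 2 * x * t) * t ^ b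
  have hw : ∀ k : ℝ, 0 ≤ k → IntegrableOn (fun t => t ^ k * w t) (Ioi 0) := fun k hk =>
    (integrableOn_Fa_integrand (b := b + k) (by linarith) x).congr_fun
      (fun t (ht : 0 < t) => by simp only [w, rpow_add ht]; ring) measurableSet_Ioi
  -- `l` is the mean of `t` under the weight `w`, where `∫ (t - l)² w` is smallest.
  set l := Fa (b + 1) x / Fa b x with hl
  have hexpand : EqOn (fun t => (t - l) ^ 2 * w t)
      (fun t => t ^ (2 : ℝ) * w t - 2 * l * (t ^ (1 : ℝ) * w t) + l ^ 2 * w t) (Ioi 0) :=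
    fun t _ => by simp only [rpow_two, rpow_one]; ring
  have hint₂ := hw 2 zero_le_two
  have hint₁ : IntegrableOn (fun t => 2 * l * (t ^ (1 : ℝ) * w t)) (Ioi 0) :=
    (hw 1 zero_le_one).const_mul _
  have hint₀ : IntegrableOn (fun t => l ^ 2 * w t) (Ioi 0) :=
    (integrableOn_Fa_integrand hb x).const_mul _
  have hint₂₁ : IntegrableOn (fun t => t ^ (2 : ℝ) * w t - 2 * l * (t ^ (1 : ℝ) * w t)) (Ioi 0) :=
    hint₂.sub hint₁
  have hpos : 0 < ∫ t in Ioi 0, (t - l) ^ 2 * w t := by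
    refine setIntegral_pos_of_ae_pos_s12 (by simp)
      ((hint₂₁.add hint₀).congr_fun hexpand.symm measurableSet_Ioi) ?_
    filter_upwards [ae_restrict_mem measurableSet_Ioi, ae_restrict_of_ae (Measure.ae_ne volume l)]
      with t (ht : 0 < t) htl
    have := sub_ne_zero.2 htl
    positivity
  have hvalue : ∫ t in Ioi 0, (t - l) ^ 2 * w t =
      Fa (b + 2) x - 2 * l * Fa (b + 1) x + l ^ 2 * Fa b x := by
    rw [setIntegral_congr_fun measurableSet_Ioi hexpand, integral_add hint₂₁ hint₀,
      integral_sub hint₂ hint₁, integral_const_mul, integral_const_mul, Fa_add_eq_integral,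
      Fa_add_eq_integral]
    rfl
  have hF := Fa_pos_s12 hb x
  have hdisc : Fa b x * (Fa (b + 2) x - 2 * l * Fa (b + 1) x + l ^ 2 * Fa b x) =
      Fa b x * Fa (b + 2) x - Fa (b + 1) x ^ 2 := by
    rw [hl]
    field_simp
    ring
  nlinarith [mul_pos hF hpos]

end Fa

section Cramer

variable {φ f : ℝ → ℝ} {y : ℝ}

noncomputable def cramerDet (φ : ℝ → ℝ) (y : ℝ) : ℝ :=
  deriv φ y ^ 2 - φ y * deriv (deriv φ) y

noncomputable def cramerM₁ (φ f : ℝ → ℝ) (y : ℝ) : ℝ :=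
  (f y * deriv φ y - deriv f y * φ y) / cramerDet φ y

noncomputable def cramerM₂ (φ f : ℝ → ℝ) (y : ℝ) : ℝ :=
  (deriv f y * deriv φ y - f y * deriv (deriv φ) y) / cramerDet φ y

lemma cramerM₁_mul_deriv_add_cramerM₂_mul (h : cramerDet φ y ≠ 0) :
    cramerM₁ φ f y * deriv φ y + cramerM₂ φ f y * φ y = f y := by
  unfold cramerM₁ cramerM₂
  field_simp
  unfold cramerDet
  ring

lemma cramerM₁_mul_deriv_deriv_add_cramerM₂_mul_deriv (h : cramerDet φ y ≠ 0) :
    cramerM₁ φ f y * deriv (deriv φ) y + cramerM₂ φ f y * deriv φ y = deriv f y := by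
  unfold cramerM₁ cramerM₂
  field_simp
  unfold cramerDet
  ring

lemma contDiff_cramerDet (hφ : ContDiff ℝ 3 φ) : ContDiff ℝ 1 (cramerDet φ) := by
  have h₁ : ContDiff ℝ 2 (deriv φ) := hφ.deriv'
  have h₂ : ContDiff ℝ 1 (deriv (deriv φ)) := h₁.deriv'
  unfold cramerDet
  exact ((h₁.of_le (by norm_num)).pow 2).sub ((hφ.of_le (by norm_num)).mul h₂)

lemma contDiff_cramerM₁ (hφ : ContDiff ℝ 3 φ) (hf : ContDiff ℝ 2 f)
    (hD : ∀ y, cramerDet φ y ≠ 0) : ContDiff ℝ 1 (cramerM₁ φ f) := by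
  have h₁ : ContDiff ℝ 2 (deriv φ) := hφ.deriv'
  have hf₁ : ContDiff ℝ 1 (deriv f) := hf.deriv'
  unfold cramerM₁
  exact (((hf.of_le (by norm_num)).mul (h₁.of_le (by norm_num))).sub
    (hf₁.mul (hφ.of_le (by norm_num)))).div (contDiff_cramerDet hφ) hD

lemma contDiff_cramerM₂ (hφ : ContDiff ℝ 3 φ) (hf : ContDiff ℝ 2 f)
    (hD : ∀ y, cramerDet φ y ≠ 0) : ContDiff ℝ 1 (cramerM₂ φ f) := by
  have h₁ : ContDiff ℝ 2 (deriv φ) := hφ.deriv'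
  have h₂ : ContDiff ℝ 1 (deriv (deriv φ)) := h₁.deriv'
  have hf₁ : ContDiff ℝ 1 (deriv f) := hf.deriv'
  unfold cramerM₂
  exact ((hf₁.mul (h₁.of_le (by norm_num))).sub ((hf.of_le (by norm_num)).mul h₂)).div
    (contDiff_cramerDet hφ) hD

lemma deriv_mul_deriv_cramerM₁_add_mul_deriv_cramerM₂ (hφ : ContDiff ℝ 3 φ) (hf : ContDiff ℝ 2 f)
    (hD : ∀ y, cramerDet φ y ≠ 0) (y : ℝ) :
    deriv φ y * deriv (cramerM₁ φ f) y + φ y * deriv (cramerM₂ φ f) y = 0 := by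
  have hM₁ := (contDiff_cramerM₁ hφ hf hD).differentiable one_ne_zero y
  have hM₂ := (contDiff_cramerM₂ hφ hf hD).differentiable one_ne_zero y
  have hφ₁ := hφ.differentiable (by norm_num) y
  have hφ₂ := (hφ.deriv' (n := 2)).differentiable (by norm_num) y
  have hsum : cramerM₁ φ f * deriv φ + cramerM₂ φ f * φ = f :=
    funext fun y => cramerM₁_mul_deriv_add_cramerM₂_mul (hD y)
  have hderiv := (hM₁.hasDerivAt.mul hφ₂.hasDerivAt).add (hM₂.hasDerivAt.mul hφ₁.hasDerivAt)
  rw [hsum] at hderiv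
  linear_combination -hderiv.deriv - cramerM₁_mul_deriv_deriv_add_cramerM₂_mul_deriv (f := f) (hD y)

end Cramer

lemma eq_of_hasDerivWithinAt_zero {g : ℝ → ℝ} {s : Set ℝ} (hs : Convex ℝ s)
    (hg : ∀ x ∈ s, HasDerivWithinAt g 0 s x) {x y : ℝ} (hx : x ∈ s) (hy : y ∈ s) :
    g x = g y := by
  simpa [sub_eq_zero, eq_comm] using
    hs.norm_image_sub_le_of_norm_hasDerivWithin_le hg (C := 0) (fun _ _ => by simp) hx hy

lemma hasDerivWithinAt_integral_Icc {q : ℝ → ℝ} {a b x : ℝ} (hq : ContinuousOn q (Icc a b))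
    (hx : x ∈ Icc a b) :
    HasDerivWithinAt (fun u => ∫ t in a..u, q t) (q x) (Icc a b) x := by
  have : Fact (x ∈ Icc a b) := ⟨hx⟩
  exact intervalIntegral.integral_hasDerivWithinAt_right
    (hq.mono (uIcc_subset_Icc (left_mem_Icc.2 (hx.1.trans hx.2)) hx)).intervalIntegrable
    (hq.stronglyMeasurableAtFilter_nhdsWithin measurableSet_Icc x) (hq x hx)

theorem exp_integral_mul_mul_cramerM₂_eq {φ f Y Yd : ℝ → ℝ} {a b : ℝ} (hφ : ContDiff ℝ 3 φ)
    (hφ₀ : ∀ x, φ x ≠ 0) (hD : ∀ x, cramerDet φ x ≠ 0) (hf : ContDiff ℝ 2 f)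
    (hYd : ∀ ℓ ∈ Icc a b, HasDerivWithinAt Y (Yd ℓ) (Icc a b) ℓ)
    (hM₁ : ∀ ℓ ∈ Icc a b, deriv (cramerM₁ φ f) (Y ℓ) ≠ 0)
    (hODE : ∀ ℓ ∈ Icc a b, Yd ℓ = cramerM₂ φ f (Y ℓ) / deriv (cramerM₁ φ f) (Y ℓ))
    {ℓ₁ ℓ₂ : ℝ} (hℓ₁ : ℓ₁ ∈ Icc a b) (hℓ₂ : ℓ₂ ∈ Icc a b) :
    exp (∫ x in a..ℓ₁, (1 - Yd x) * (deriv φ (Y x) / φ (Y x))) * φ (Y ℓ₁) *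
        cramerM₂ φ f (Y ℓ₁) =
      exp (∫ x in a..ℓ₂, (1 - Yd x) * (deriv φ (Y x) / φ (Y x))) * φ (Y ℓ₂) *
        cramerM₂ φ f (Y ℓ₂) := by
  have hM₁c := contDiff_cramerM₁ hφ hf hD
  have hM₂c := contDiff_cramerM₂ hφ hf hD
  have hY : ContinuousOn Y (Icc a b) := fun x hx => (hYd x hx).continuousWithinAt
  set q := fun x => (1 - Yd x) * (deriv φ (Y x) / φ (Y x))
  have hq : ContinuousOn q (Icc a b) := by
    refine ContinuousOn.mul ?_ (((hφ.continuous_deriv (by norm_num)).comp_continuousOn hY).div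
      (hφ.continuous.comp_continuousOn hY) fun x _ => hφ₀ (Y x))
    refine continuousOn_const.sub (ContinuousOn.congr ?_ hODE)
    exact (hM₂c.continuous.comp_continuousOn hY).div
      ((hM₁c.continuous_deriv le_rfl).comp_continuousOn hY) hM₁
  refine eq_of_hasDerivWithinAt_zero (g := fun ℓ => exp (∫ x in a..ℓ, q x) * φ (Y ℓ) *
    cramerM₂ φ f (Y ℓ)) (convex_Icc a b) (fun x hx => ?_) hℓ₁ hℓ₂
  have hφY := (hφ.differentiable (by norm_num) (Y x)).hasDerivAt.comp_hasDerivWithinAt x (hYd x hx)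
  have hM₂Y := (hM₂c.differentiable one_ne_zero (Y x)).hasDerivAt.comp_hasDerivWithinAt x
    (hYd x hx)
  have hslope : Yd x * deriv (cramerM₁ φ f) (Y x) = cramerM₂ φ f (Y x) := by
    rw [hODE x hx, div_mul_cancel₀ _ (hM₁ x hx)]
  have key := deriv_mul_deriv_cramerM₁_add_mul_deriv_cramerM₂ hφ hf hD (Y x)
  refine (((hasDerivWithinAt_integral_Icc hq hx).exp.mul hφY).mul hM₂Y).congr_deriv ?_
  have hqx : q x * φ (Y x) = (1 - Yd x) * deriv φ (Y x) := by
    simp only [q, mul_assoc, div_mul_cancel₀ _ (hφ₀ (Y x))]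
  simp only [Function.comp_apply, Pi.mul_apply]
  linear_combination exp (∫ t in a..x, q t) *
    (cramerM₂ φ f (Y x) * hqx - deriv φ (Y x) * hslope + Yd x * key)

section Phi

variable {β σh δ c : ℝ}

lemma hasDerivAt_Fa_comp_affine {b : ℝ} (hb : -1 < b) (c β s x : ℝ) :
    HasDerivAt (fun x => Fa b ((c - β * x) / s)) (2 * β / s * Fa (b + 1) ((c - β * x) / s)) x := by
  refine (hasDerivAt_Fa_s12 hb _).comp x ((((hasDerivAt_id' x).const_mul β).const_sub c).div_const s)
    |>.congr_deriv ?_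
  ring

lemma Phi_pos (ha : -1 < δ / β - 1) (x : ℝ) : 0 < Phi β σh δ c x :=
  Fa_pos_s12 ha _

lemma contDiff_Phi (ha : -1 < δ / β - 1) (n : ℕ) : ContDiff ℝ n (Phi β σh δ c) :=
  (contDiff_Fa n ha).comp (by fun_prop)

lemma deriv_Phi (ha : -1 < δ / β - 1) :
    deriv (Phi β σh δ c) = fun x =>
      2 * β / (√β * σh) * Fa (δ / β - 1 + 1) ((c - β * x) / (√β * σh)) :=
  funext fun x => (hasDerivAt_Fa_comp_affine ha c β _ x).deriv

lemma deriv_deriv_Phi (ha : -1 < δ / β - 1) :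
    deriv (deriv (Phi β σh δ c)) = fun x =>
      2 * β / (√β * σh) * (2 * β / (√β * σh) * Fa (δ / β - 1 + 2) ((c - β * x) / (√β * σh))) := by
  rw [deriv_Phi ha, show δ / β - 1 + 2 = δ / β - 1 + 1 + 1 by ring]
  exact funext fun x => ((hasDerivAt_Fa_comp_affine (by linarith) c β _ x).const_mul _).deriv

lemma cramerDet_Phi_neg (hβ : 0 < β) (hσ : 0 < σh) (hδ : 0 < δ) (x : ℝ) :
    cramerDet (Phi β σh δ c) x < 0 := by
  have ha : -1 < δ / β - 1 := by linarith [div_pos hδ hβ]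
  have hκ : 0 < 2 * β / (√β * σh) := by positivity
  have hCS := Fa_sq_lt_mul ha ((c - β * x) / (√β * σh))
  rw [cramerDet, deriv_deriv_Phi ha, deriv_Phi ha, Phi]
  nlinarith [mul_pos (pow_pos hκ 2) (sub_pos.2 hCS)]

end Phi

theorem exp_r_Phi_M2_constant_general (β σh δ c : ℝ) (hβ : 0 < β) (hσ : 0 < σh) (hδ : 0 < δ)
    (f : ℝ → ℝ) (hf : ContDiff ℝ 2 f)
    (Θ : ℝ) (Y Yd : ℝ → ℝ)
    (hYd : ∀ ℓ ∈ Set.Icc (0 : ℝ) Θ, HasDerivWithinAt Y (Yd ℓ) (Set.Icc 0 Θ) ℓ)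
    (hM1' : ∀ ℓ ∈ Set.Icc (0 : ℝ) Θ, deriv (M1 β σh δ c f) (Y ℓ) ≠ 0)
    (hODE : ∀ ℓ ∈ Set.Icc (0 : ℝ) Θ,
      Yd ℓ = M2 β σh δ c f (Y ℓ) / deriv (M1 β σh δ c f) (Y ℓ)) :
    let r : ℝ → ℝ := fun ℓ =>
      ∫ x in (0 : ℝ)..ℓ, (1 - Yd x) * (deriv (Phi β σh δ c) (Y x) / Phi β σh δ c (Y x));
    ∀ ℓ₁ ∈ Set.Icc (0 : ℝ) Θ, ∀ ℓ₂ ∈ Set.Icc (0 : ℝ) Θ,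
      Real.exp (r ℓ₁) * Phi β σh δ c (Y ℓ₁) * M2 β σh δ c f (Y ℓ₁) =
      Real.exp (r ℓ₂) * Phi β σh δ c (Y ℓ₂) * M2 β σh δ c f (Y ℓ₂) := by
  intro r ℓ₁ hℓ₁ ℓ₂ hℓ₂
  have ha : -1 < δ / β - 1 := by linarith [div_pos hδ hβ]
  exact exp_integral_mul_mul_cramerM₂_eq (contDiff_Phi ha 3) (fun x => (Phi_pos ha x).ne')
    (fun x => (cramerDet_Phi_neg hβ hσ hδ x).ne) hf hYd hM1' hODE hℓ₁ hℓ₂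

/-- Along any solution `𝕪` of the boundary ODE `𝕪' = M₂(𝕪)/M₁'(𝕪)` on `[0,Θ]`, the function
`ℓ ↦ exp(𝕣(ℓ))·Φ(𝕪(ℓ))·M₂(𝕪(ℓ))` is constant, where
`𝕣(ℓ) = ∫₀^ℓ (1 - 𝕪'(x))·(Φ'(𝕪(x))/Φ(𝕪(x))) dx`. -/
theorem exp_r_Phi_M2_constant (β σh δ c : ℝ) (hβ : 0 < β) (hσ : 0 < σh) (hδ : 0 < δ)
    (f : ℝ → ℝ) (hf : ContDiff ℝ 2 f)
    (Θ : ℝ) (hΘ : 0 < Θ) (Y Yd : ℝ → ℝ)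
    (hYd : ∀ ℓ ∈ Set.Icc (0 : ℝ) Θ, HasDerivWithinAt Y (Yd ℓ) (Set.Icc 0 Θ) ℓ)
    (hM1' : ∀ ℓ ∈ Set.Icc (0 : ℝ) Θ, deriv (M1 β σh δ c f) (Y ℓ) ≠ 0)
    (hODE : ∀ ℓ ∈ Set.Icc (0 : ℝ) Θ,
      Yd ℓ = M2 β σh δ c f (Y ℓ) / deriv (M1 β σh δ c f) (Y ℓ)) :
    let r : ℝ → ℝ := fun ℓ =>
      ∫ x in (0 : ℝ)..ℓ, (1 - Yd x) * (deriv (Phi β σh δ c) (Y x) / Phi β σh δ c (Y x));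
    ∀ ℓ₁ ∈ Set.Icc (0 : ℝ) Θ, ∀ ℓ₂ ∈ Set.Icc (0 : ℝ) Θ,
      Real.exp (r ℓ₁) * Phi β σh δ c (Y ℓ₁) * M2 β σh δ c f (Y ℓ₁) =
      Real.exp (r ℓ₂) * Phi β σh δ c (Y ℓ₂) * M2 β σh δ c f (Y ℓ₂) :=
  exp_r_Phi_M2_constant_general β σh δ c hβ hσ hδ f hf Θ Y Yd hYd hM1' hODE
end
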